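/- arXiv:0811.4380 — 2 statements merged into one kernel-verified Lean document; each statement's English description precedes it below -/
import Mathlib

section
/- Let n ≥ 2 and let M be the Coxeter matrix of affine type Ã_n: the index set is ZMod (n+1), with M i i = 1, M i j = 3 when i − j = ±1 in ZMod (n+1), and M i j = 2 otherwise (so the Coxeter graph is a cycle on n+1 vertices with all edge labels 3). Then every word in the generators with the intervening neighbours property is reduced. -/
/-- A word `w` in the alphabet `B` has the *intervening neighbours* property with respect to
the Coxeter matrix `M` if any two occurrences of the same letter are separated by all of its
neighbours in the Coxeter graph of `M` (two distinct letters `s`, `t` being neighbours when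
`M s t ≠ 2`). -/
def HasInterveningNeighbours {B : Type*} (M : CoxeterMatrix B) (w : List B) : Prop :=
  ∀ (i j : ℕ) (hi : i < w.length) (hj : j < w.length), i < j →
    w.get ⟨i, hi⟩ = w.get ⟨j, hj⟩ →
    ∀ t : B, t ≠ w.get ⟨i, hi⟩ → M t (w.get ⟨i, hi⟩) ≠ 2 →
      ∃ (k : ℕ) (hk : k < w.length), i < k ∧ k < j ∧ w.get ⟨k, hk⟩ = t

/-- The Coxeter matrix of affine type Ãₙ (for `n ≥ 2`): the index set is `ZMod (n+1)`, and the
Coxeter graph is a cycle on the `n+1` vertices with all edge labels equal to `3`. -/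
def CoxeterMatrixAffineA (n : ℕ) : CoxeterMatrix (ZMod (n + 1)) where
  M := Matrix.of fun i j : ZMod (n + 1) =>
    if i = j then 1 else if i - j = 1 ∨ j - i = 1 then 3 else 2
  isSymm := by
    unfold Matrix.IsSymm
    ext i j
    simp only [Matrix.transpose_apply, Matrix.of_apply]
    rcases eq_or_ne i j with rfl | h
    · simp
    · rw [if_neg h.symm, if_neg h]
      exact if_congr or_comm rfl rfl
  diagonal := by intro i; simp
  off_diagonal := by
    intro i i' h
    simp only [Matrix.of_apply, if_neg h]
    split_ifs <;> omega

/-!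
The simple reflections act on `ℤ` as the `(n + 1)`-periodic permutations `sᵢ` exchanging `x` and
`x + 1` whenever `x ≡ i`, and these satisfy the Coxeter relations of `Ãₙ`. For a periodic
permutation `f`, the number of inversions counted up to simultaneous translation changes by at most
one under `f ↦ f * sᵢ`, and increases exactly when `f x < f (x + 1)` for `x ≡ i`. It is therefore a
lower bound for the Coxeter length, and a word is reduced as soon as each of its letters increases
the inversion number of the preceding prefix.

For a word with intervening neighbours this is seen by following wires, the positions of a fixed
value under the successive prefixes. Since both `c - 1` and `c + 1` occur between two letters `c`,
a wire that has moved left never moves right again, and vice versa. If the two values meeting at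
the `k`-th letter were inverted, their wires would have crossed at a last step `m < k` and stayed
put since; the letter of step `m` then recurs at step `k` without a `c - 1` in between.
-/

open scoped AddConstMap

theorem AddConstEquiv.mul_apply {G : Type*} [Add G] {a : G} (f g : G ≃+c[a, a] G) (x : G) :
    (f * g) x = f (g x) := rfl

theorem AddConstEquiv.inv_apply_apply {G : Type*} [Add G] {a : G} (f : G ≃+c[a, a] G) (x : G) :
    f⁻¹ (f x) = x :=
  f.symm_apply_apply x

theorem pow_three_eq_one_of_braid {G : Type*} [Group G] {a b : G} (ha : a * a = 1)
    (hb : b * b = 1) (h : a * b * a = b * a * b) : (a * b) ^ 3 = 1 :=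
  calc (a * b) ^ 3 = (a * b * a) * (b * a * b) := by
        simp only [pow_succ, pow_zero, one_mul, mul_assoc]
    _ = b * a * (b * b) * a * b := by rw [h]; group
    _ = 1 := by rw [hb, mul_one, mul_assoc b, ha, mul_one, hb]

section Coxeter

variable {B W : Type*} [Group W] {M : CoxeterMatrix B} (cs : CoxeterSystem M W)

theorem CoxeterSystem.lift_wordProd {G : Type*} [Monoid G] {f : B → G} (hf : M.IsLiftable f)
    (ω : List B) : cs.lift ⟨f, hf⟩ (cs.wordProd ω) = (ω.map f).prod := by
  simp [CoxeterSystem.wordProd, map_list_prod, Function.comp_def, cs.lift_apply_simple hf]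

theorem CoxeterSystem.isReduced_of_forall_add_one_le (μ : W → ℕ∞) (h₁ : μ 1 = 0)
    (hμ : ∀ w i, μ (w * cs.simple i) ≤ μ w + 1) {ω : List B}
    (hω : ∀ k (hk : k < ω.length),
      μ (cs.wordProd (ω.take k)) + 1 ≤ μ (cs.wordProd (ω.take k) * cs.simple ω[k])) :
    cs.IsReduced ω := by
  have hword : ∀ σ : List B, μ (cs.wordProd σ) ≤ σ.length := by
    intro σ
    induction σ using List.reverseRecOn with
    | nil => simp [h₁]
    | append_singleton σ i ih =>
      rw [cs.wordProd_append, cs.wordProd_singleton, List.length_append, List.length_singleton,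
        Nat.cast_add, Nat.cast_one]
      exact (hμ _ _).trans (by gcongr)
  have hlength : ∀ w, μ w ≤ cs.length w := by
    intro w
    obtain ⟨σ, hσ, rfl⟩ := cs.exists_isReduced w
    rw [hσ.eq]
    exact hword σ
  have hprefix : ∀ k ≤ ω.length, (k : ℕ∞) ≤ μ (cs.wordProd (ω.take k)) := by
    intro k
    induction k with
    | zero => simp
    | succ k ih =>
      intro hk
      rw [← List.take_concat_get' ω k hk, cs.wordProd_append,
        cs.wordProd_singleton, Nat.cast_succ]
      exact le_trans (by gcongr; exact ih (by omega)) (hω k hk)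
  have := (hprefix ω.length le_rfl).trans (hlength _)
  rw [List.take_length] at this
  exact le_antisymm (cs.length_wordProd_le ω) (by exact_mod_cast this)

end Coxeter

section AffineSwap

variable {N : ℕ}

def affineSwap (i : ZMod N) (x : ℤ) : ℤ :=
  if (x : ZMod N) - i = 0 then x + 1 else if (x : ZMod N) - i = 1 then x - 1 else x

variable {i : ZMod N} {x y : ℤ}

theorem affineSwap_of_sub_eq_zero (h : (x : ZMod N) - i = 0) : affineSwap i x = x + 1 := by
  simp [affineSwap, h]

theorem affineSwap_of_sub_ne (h₀ : (x : ZMod N) - i ≠ 0) (h₁ : (x : ZMod N) - i ≠ 1) :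
    affineSwap i x = x := by
  simp [affineSwap, h₀, h₁]

theorem affineSwap_le_self (h : (x : ZMod N) - i ≠ 0) : affineSwap i x ≤ x := by
  rw [affineSwap, if_neg h]
  split_ifs <;> omega

theorem sub_one_le_affineSwap (i : ZMod N) (x : ℤ) : x - 1 ≤ affineSwap i x := by
  unfold affineSwap
  split_ifs <;> omega

theorem affineSwap_le_add_one (i : ZMod N) (x : ℤ) : affineSwap i x ≤ x + 1 := by
  unfold affineSwap
  split_ifs <;> omega

theorem affineSwap_eq_add_one_iff : affineSwap i x = x + 1 ↔ (x : ZMod N) - i = 0 := by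
  refine ⟨fun h => ?_, affineSwap_of_sub_eq_zero⟩
  by_contra h₀
  rw [affineSwap, if_neg h₀] at h
  split_ifs at h <;> omega

theorem affineSwap_add_mul (i : ZMod N) (x q : ℤ) :
    affineSwap i (x + N * q) = affineSwap i x + N * q := by
  simp only [affineSwap, Int.cast_add, Int.cast_mul, Int.cast_natCast, ZMod.natCast_self,
    zero_mul, add_zero]
  split_ifs <;> ring

variable [Fact (1 < N)]

theorem affineSwap_of_sub_eq_one (h : (x : ZMod N) - i = 1) : affineSwap i x = x - 1 := by
  simp [affineSwap, h]

theorem affineSwap_eq_sub_one_iff : affineSwap i x = x - 1 ↔ (x : ZMod N) - i = 1 := by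
  refine ⟨fun h => ?_, affineSwap_of_sub_eq_one⟩
  unfold affineSwap at h
  split_ifs at h with h₀ h₁ <;> omega

theorem affineSwap_involutive (i : ZMod N) : Function.Involutive (affineSwap i) := by
  intro x
  by_cases h₀ : (x : ZMod N) - i = 0
  · rw [affineSwap_of_sub_eq_zero h₀,
      affineSwap_of_sub_eq_one (by push_cast; linear_combination h₀), add_sub_cancel_right]
  by_cases h₁ : (x : ZMod N) - i = 1
  · rw [affineSwap_of_sub_eq_one h₁,
      affineSwap_of_sub_eq_zero (by push_cast; linear_combination h₁), sub_add_cancel]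
  rw [affineSwap_of_sub_ne h₀ h₁, affineSwap_of_sub_ne h₀ h₁]

theorem affineSwap_neg (i : ZMod N) (x : ℤ) : affineSwap (-1 - i) (-x) = -affineSwap i x := by
  by_cases h₀ : (x : ZMod N) - i = 0
  · rw [affineSwap_of_sub_eq_zero h₀,
      affineSwap_of_sub_eq_one (by push_cast; linear_combination -h₀), neg_add, sub_eq_add_neg]
  by_cases h₁ : (x : ZMod N) - i = 1
  · rw [affineSwap_of_sub_eq_one h₁,
      affineSwap_of_sub_eq_zero (by push_cast; linear_combination -h₁), neg_sub, sub_eq_neg_add]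
  rw [affineSwap_of_sub_ne h₀ h₁, affineSwap_of_sub_ne]
  · exact fun h => h₁ (by push_cast at h; linear_combination -h)
  · exact fun h => h₀ (by push_cast at h; linear_combination -h)

theorem affineSwap_lt_affineSwap (hxy : x < y) (h : (x : ZMod N) - i = 0 → y ≠ x + 1) :
    affineSwap i x < affineSwap i y := by
  have hx := affineSwap_le_add_one i x
  have hy := sub_one_le_affineSwap i y
  by_contra! hyx
  obtain rfl | rfl : y = x + 1 ∨ y = x + 2 := by omega
  · have hx₀ : (x : ZMod N) - i ≠ 0 := fun hx₀ => h hx₀ rfl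
    have hy₁ : ((x + 1 : ℤ) : ZMod N) - i = 1 :=
      affineSwap_eq_sub_one_iff.mp (by linarith [affineSwap_le_self hx₀])
    exact hx₀ (by push_cast at hy₁; linear_combination hy₁)
  · have hx₀ := affineSwap_eq_add_one_iff.mp (by omega : affineSwap i x = x + 1)
    have hy₁ := affineSwap_eq_sub_one_iff.mp (by omega : affineSwap i (x + 2) = x + 2 - 1)
    exact one_ne_zero (α := ZMod N) (by push_cast at hy₁; linear_combination hy₁ - hx₀)

omit [Fact (1 < N)] in
theorem affineSwap_eq_self_of_affineSwap_ne {j : ZMod N} (hij : i ≠ j) (hij₁ : i - j ≠ 1)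
    (hji₁ : j - i ≠ 1) (h : affineSwap i x ≠ x) : affineSwap j x = x := by
  have hx : (x : ZMod N) - i = 0 ∨ (x : ZMod N) - i = 1 := by
    by_contra! hx
    exact h (affineSwap_of_sub_ne hx.1 hx.2)
  apply affineSwap_of_sub_ne <;> rcases hx with hx | hx <;> intro h'
  exacts [hij (by linear_combination h' - hx), hji₁ (by linear_combination hx - h'),
    hij₁ (by linear_combination h' - hx), hij (by linear_combination h' - hx)]

theorem affineSwap_comm {j : ZMod N} (hij : i ≠ j) (hij₁ : i - j ≠ 1) (hji₁ : j - i ≠ 1)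
    (x : ℤ) : affineSwap i (affineSwap j x) = affineSwap j (affineSwap i x) := by
  have moved : ∀ {i j : ZMod N}, i ≠ j → i - j ≠ 1 → j - i ≠ 1 → affineSwap i x ≠ x →
      affineSwap i (affineSwap j x) = affineSwap j (affineSwap i x) := fun hij hij₁ hji₁ h => by
    rw [affineSwap_eq_self_of_affineSwap_ne hij hij₁ hji₁ h,
      affineSwap_eq_self_of_affineSwap_ne hij hij₁ hji₁ (by rwa [affineSwap_involutive, ne_comm])]
  by_cases hi : affineSwap i x = x
  · by_cases hj : affineSwap j x = x
    · rw [hj, hi, hj]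
    · exact (moved hij.symm hji₁ hij₁ hj).symm
  · exact moved hij hij₁ hji₁ hi

set_option maxHeartbeats 1000000 in
theorem affineSwap_braid (h₂ : (2 : ZMod N) ≠ 0) (i : ZMod N) (x : ℤ) :
    affineSwap i (affineSwap (i + 1) (affineSwap i x)) =
      affineSwap (i + 1) (affineSwap i (affineSwap (i + 1) x)) := by
  have : (1 : ZMod N) ≠ 0 := one_ne_zero
  obtain h | h | h | h : (x : ZMod N) - i = 0 ∨ (x : ZMod N) - i = 1 ∨ (x : ZMod N) - i = 2 ∨
      ((x : ZMod N) - i ≠ 0 ∧ (x : ZMod N) - i ≠ 1 ∧ (x : ZMod N) - i ≠ 2) := by tauto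
  all_goals
    simp (disch := (push_cast; grind)) only
      [affineSwap_of_sub_eq_zero, affineSwap_of_sub_eq_one, affineSwap_of_sub_ne]
  ring

def affineSwapEquiv (i : ZMod N) : ℤ ≃+c[(N : ℤ), (N : ℤ)] ℤ where
  toEquiv := (affineSwap_involutive i).toPerm
  map_add_const' x := by simpa using affineSwap_add_mul i x 1

theorem affineSwapEquiv_apply (i : ZMod N) (x : ℤ) : affineSwapEquiv i x = affineSwap i x := rfl

theorem affineSwapEquiv_mul_self (i : ZMod N) : affineSwapEquiv i * affineSwapEquiv i = 1 :=
  AddConstEquiv.ext (affineSwap_involutive i)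

end AffineSwap

section Inversions

variable {N : ℕ}

-- Inversions are counted up to simultaneous translation by `N`, via their representative whose
-- first entry lies in `[0, N)`.
def inversions (f : ℤ ≃+c[(N : ℤ), (N : ℤ)] ℤ) : Set (ℤ × ℤ) :=
  {p | 0 ≤ p.1 ∧ p.1 < N ∧ p.1 < p.2 ∧ f p.2 < f p.1}

def simpleInversion (i : ZMod N) : ℤ × ℤ := (i.val, i.val + 1)

-- The pair `(sᵢ a, sᵢ b)` translated back into the window `[0, N)`.
def swapInversion (i : ZMod N) (p : ℤ × ℤ) : ℤ × ℤ :=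
  (affineSwap i p.1 - N * (affineSwap i p.1 / N), affineSwap i p.2 - N * (affineSwap i p.1 / N))

theorem inversions_one : inversions (1 : ℤ ≃+c[(N : ℤ), (N : ℤ)] ℤ) = ∅ :=
  Set.eq_empty_of_forall_notMem fun _ hp => hp.2.2.1.not_gt hp.2.2.2

variable [Fact (1 < N)] {i : ZMod N}

theorem eq_val_of_sub_eq_zero {a : ℤ} (ha₀ : 0 ≤ a) (haN : a < N) (h : (a : ZMod N) - i = 0) :
    a = i.val := by
  rw [sub_eq_zero] at h
  rw [← h, ZMod.val_intCast, Int.emod_eq_of_lt ha₀ haN]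

theorem affineSwap_val (i : ZMod N) : affineSwap i i.val = i.val + 1 :=
  affineSwap_of_sub_eq_zero (by simp)

theorem affineSwap_val_add_one (i : ZMod N) : affineSwap i (i.val + 1) = i.val := by
  rw [affineSwap_of_sub_eq_one (by simp), add_sub_cancel_right]

theorem swapInversion_swapInversion {p : ℤ × ℤ} (hp₀ : 0 ≤ p.1) (hpN : p.1 < N) :
    swapInversion i (swapInversion i p) = p := by
  have hN : (N : ℤ) ≠ 0 := by have := (Fact.out : 1 < N); omega
  have hs : ∀ y q : ℤ, affineSwap i (y - N * q) = affineSwap i y - N * q := fun y q => by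
    simpa [sub_eq_add_neg] using affineSwap_add_mul i y (-q)
  obtain ⟨a, b⟩ := p
  have hq : (a - N * (affineSwap i a / N)) / N = -(affineSwap i a / N) := by
    rw [sub_eq_add_neg, ← mul_neg, Int.add_mul_ediv_left _ _ hN, Int.ediv_eq_zero_of_lt hp₀ hpN,
      zero_add]
  simp only [swapInversion]
  rw [hs, hs, affineSwap_involutive i a, affineSwap_involutive i b, hq]
  ext <;> ring

theorem swapInversion_simpleInversion :
    (swapInversion i (simpleInversion i)).2 < (swapInversion i (simpleInversion i)).1 := by
  simp only [swapInversion, simpleInversion, affineSwap_val, affineSwap_val_add_one]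
  omega

theorem mapsTo_swapInversion (f : ℤ ≃+c[(N : ℤ), (N : ℤ)] ℤ) (i : ZMod N) :
    Set.MapsTo (swapInversion i) (inversions (f * affineSwapEquiv i) \ {simpleInversion i})
      (inversions f \ {simpleInversion i}) := by
  rintro ⟨a, b⟩ ⟨⟨ha₀, haN, hab, hf⟩, hne⟩
  dsimp only at ha₀ haN hab hf
  have hN : (0 : ℤ) < N := by have := (Fact.out : 1 < N); omega
  have hs : affineSwap i a < affineSwap i b := affineSwap_lt_affineSwap hab fun h hb =>
    hne (by rw [Set.mem_singleton_iff, simpleInversion, hb, eq_val_of_sub_eq_zero ha₀ haN h])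
  have hf' : ∀ y q : ℤ, f (y - N * q) = f y - N * q := fun y q => by
    simpa [mul_comm] using AddConstMapClass.map_sub_zsmul f y q
  refine ⟨⟨?_, ?_, by simp only [swapInversion]; omega, ?_⟩, fun h => ?_⟩
  · simpa [swapInversion, ← Int.emod_def] using Int.emod_nonneg _ hN.ne'
  · simpa [swapInversion, ← Int.emod_def] using Int.emod_lt_of_pos _ hN
  · simpa only [swapInversion, hf', sub_lt_sub_iff_right, AddConstEquiv.mul_apply,
      affineSwapEquiv_apply] using hf
  · have hab' := congrArg (swapInversion i) (Set.mem_singleton_iff.mp h)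
    rw [swapInversion_swapInversion ha₀ haN] at hab'
    have := swapInversion_simpleInversion (i := i)
    rw [← hab'] at this
    exact this.not_gt hab

theorem encard_inversions_mul_sdiff (f : ℤ ≃+c[(N : ℤ), (N : ℤ)] ℤ) (i : ZMod N) :
    (inversions (f * affineSwapEquiv i) \ {simpleInversion i}).encard =
      (inversions f \ {simpleInversion i}).encard := by
  have hinv : ∀ g : ℤ ≃+c[(N : ℤ), (N : ℤ)] ℤ, Set.LeftInvOn (swapInversion i)
      (swapInversion i) (inversions g \ {simpleInversion i}) := fun g p hp =>
    swapInversion_swapInversion hp.1.1 hp.1.2.1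
  have hback := mapsTo_swapInversion (f * affineSwapEquiv i) i
  rw [mul_assoc, affineSwapEquiv_mul_self, mul_one] at hback
  have hbij := Set.InvOn.bijOn ⟨hinv _, hinv _⟩ (mapsTo_swapInversion f i) hback
  rw [← hbij.image_eq, hbij.injOn.encard_image]

theorem encard_inversions_mul_le (f : ℤ ≃+c[(N : ℤ), (N : ℤ)] ℤ) (i : ZMod N) :
    (inversions (f * affineSwapEquiv i)).encard ≤ (inversions f).encard + 1 :=
  calc (inversions (f * affineSwapEquiv i)).encard
      ≤ (inversions (f * affineSwapEquiv i) \ {simpleInversion i}).encard + 1 := by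
        simpa using Set.encard_le_encard_sdiff_add_encard _ {simpleInversion i}
    _ = (inversions f \ {simpleInversion i}).encard + 1 := by
        rw [encard_inversions_mul_sdiff]
    _ ≤ (inversions f).encard + 1 := by gcongr; exact Set.sdiff_subset

theorem encard_inversions_mul_of_lt (f : ℤ ≃+c[(N : ℤ), (N : ℤ)] ℤ) (i : ZMod N)
    (h : f i.val < f (i.val + 1)) :
    (inversions (f * affineSwapEquiv i)).encard = (inversions f).encard + 1 := by
  have hmem : simpleInversion i ∈ inversions (f * affineSwapEquiv i) := by
    refine ⟨Int.natCast_nonneg _, Int.ofNat_lt.mpr (ZMod.val_lt i), Int.lt_succ _, ?_⟩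
    show f (affineSwap i (i.val + 1)) < f (affineSwap i i.val)
    rwa [affineSwap_val, affineSwap_val_add_one]
  have hnmem : simpleInversion i ∉ inversions f := fun hm => hm.2.2.2.not_gt h
  rw [← Set.encard_sdiff_singleton_add_one hmem, encard_inversions_mul_sdiff,
    Set.sdiff_singleton_eq_self hnmem]

end Inversions

theorem two_ne_zero_of_two_le {n : ℕ} (hn : 2 ≤ n) : (2 : ZMod (n + 1)) ≠ 0 := by
  have : ((2 : ℕ) : ZMod (n + 1)) ≠ 0 := by
    rw [Ne, ZMod.natCast_eq_zero_iff]
    exact fun h => by have := Nat.le_of_dvd two_pos h; omega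
  exact_mod_cast this

theorem coxeterMatrixAffineA_apply (n : ℕ) (a b : ZMod (n + 1)) :
    CoxeterMatrixAffineA n a b = if a = b then 1 else if a - b = 1 ∨ b - a = 1 then 3 else 2 :=
  rfl

theorem isLiftable_affineSwapEquiv {n : ℕ} [Fact (1 < n + 1)] (h₂ : (2 : ZMod (n + 1)) ≠ 0) :
    (CoxeterMatrixAffineA n).IsLiftable (affineSwapEquiv (N := n + 1)) := by
  have braid : ∀ i : ZMod (n + 1),
      affineSwapEquiv i * affineSwapEquiv (i + 1) * affineSwapEquiv i =
        affineSwapEquiv (i + 1) * affineSwapEquiv i * affineSwapEquiv (i + 1) := fun i =>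
    AddConstEquiv.ext fun x => by
      simpa only [AddConstEquiv.mul_apply, affineSwapEquiv_apply] using affineSwap_braid h₂ i x
  intro i j
  rw [coxeterMatrixAffineA_apply]
  split_ifs with hij hadj
  · rw [hij, pow_one, affineSwapEquiv_mul_self]
  · rcases hadj with h | h
    · obtain rfl : i = j + 1 := by linear_combination h
      exact pow_three_eq_one_of_braid (affineSwapEquiv_mul_self _)
        (affineSwapEquiv_mul_self _) (braid j).symm
    · obtain rfl : j = i + 1 := by linear_combination h
      exact pow_three_eq_one_of_braid (affineSwapEquiv_mul_self _)
        (affineSwapEquiv_mul_self _) (braid i)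
  · rw [not_or] at hadj
    have hc : Commute (affineSwapEquiv i) (affineSwapEquiv j) :=
      AddConstEquiv.ext fun x => by
        simpa only [AddConstEquiv.mul_apply, affineSwapEquiv_apply] using
          affineSwap_comm hij hadj.1 hadj.2 x
    rw [hc.mul_pow, pow_two, pow_two, affineSwapEquiv_mul_self, affineSwapEquiv_mul_self, one_mul]

section Wires

variable {N : ℕ} {a : ℕ → ZMod N} {L : ℕ} {z zb zc : ℕ → ℤ} {d : ZMod N}

-- `z t` is the position of a fixed value `v` after the first `t` letters of `a`, that is
-- `z t = (s_{a 0} ⋯ s_{a (t - 1)})⁻¹ v`.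
def IsWire (a : ℕ → ZMod N) (L : ℕ) (z : ℕ → ℤ) : Prop :=
  ∀ t < L, z (t + 1) = affineSwap (a t) (z t)

def HasInterveningShift (a : ℕ → ZMod N) (L : ℕ) (d : ZMod N) : Prop :=
  ∀ p q, p < q → q < L → a p = a q → ∃ r, p < r ∧ r < q ∧ a r = a p + d

theorem HasInterveningShift.neg (h : HasInterveningShift a L d) :
    HasInterveningShift (fun t => -1 - a t) L (-d) := by
  intro p q hpq hqL hpq'
  obtain ⟨r, hpr, hrq, hr⟩ := h p q hpq hqL (by simpa using hpq')
  exact ⟨r, hpr, hrq, show -1 - a r = -1 - a p + -d by rw [hr]; ring⟩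

variable [Fact (1 < N)]

theorem IsWire.neg (hz : IsWire a L z) : IsWire (fun t => -1 - a t) L (fun t => -z t) :=
  fun t ht => show -z (t + 1) = affineSwap (-1 - a t) (-z t) by rw [hz t ht, affineSwap_neg]

theorem IsWire.eq_iff (hb : IsWire a L zb) (hc : IsWire a L zc) {t : ℕ} (ht : t ≤ L) :
    zb t = zc t ↔ zb 0 = zc 0 := by
  induction t with
  | zero => rfl
  | succ t ih =>
    rw [hb t ht, hc t ht, (affineSwap_involutive _).injective.eq_iff, ih (by omega)]

theorem IsWire.sub_eq_zero_of_left_move (hz : IsWire a L z) {m : ℕ} (hm : m < L)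
    (hleft : z (m + 1) = z m - 1) : (z (m + 1) : ZMod N) - a m = 0 := by
  have h₁ := affineSwap_eq_sub_one_iff.mp ((hz m hm).symm.trans hleft)
  rw [hleft]
  push_cast
  linear_combination h₁

theorem IsWire.sub_ne_zero_of_left_move (hz : IsWire a L z) (ha : HasInterveningShift a L (-1))
    {m t : ℕ} (hmt : m < t) (ht : t < L) (hleft : z (m + 1) = z m - 1)
    (hstay : ∀ r, m < r → r ≤ t → z r = z (m + 1)) : (z t : ZMod N) - a t ≠ 0 := by
  -- Otherwise `a t = a m`, so `a m - 1` occurs in between and would have moved the wire left.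
  intro h
  have h₀ := hz.sub_eq_zero_of_left_move (by omega) hleft
  rw [← hstay t hmt le_rfl] at h₀
  obtain ⟨r, hmr, hrt, hr⟩ := ha m t hmt ht (by linear_combination h - h₀)
  have hleft_r : z (r + 1) = z r - 1 := by
    rw [hz r (by omega), affineSwap_eq_sub_one_iff, hstay r hmr hrt.le, ← hstay t hmt le_rfl, hr]
    linear_combination h₀
  have := hstay r hmr hrt.le
  have := hstay (r + 1) (by omega) hrt
  omega

theorem IsWire.antitoneOn_of_left_move (hz : IsWire a L z) (ha : HasInterveningShift a L (-1))
    {m : ℕ} (hleft : z (m + 1) = z m - 1) : AntitoneOn z (Set.Icc m L) := by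
  have last : ∀ t, m + 1 ≤ t → t ≤ L → ∃ t₀, t₀ < t ∧ z (t₀ + 1) = z t₀ - 1 ∧
      ∀ r, t₀ < r → r ≤ t → z r = z (t₀ + 1) := by
    intro t hmt
    induction t, hmt using Nat.le_induction with
    | base => exact fun _ => ⟨m, lt_add_one m, hleft, fun r _ _ => by rw [show r = m + 1 by omega]⟩
    | succ t hmt ih =>
      intro ht
      obtain ⟨t₀, ht₀t, hleft₀, hstay⟩ := ih (by omega)
      by_cases h₁ : (z t : ZMod N) - a t = 1
      · refine ⟨t, lt_add_one t, by rw [hz t (by omega), affineSwap_of_sub_eq_one h₁], ?_⟩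
        exact fun r _ _ => by rw [show r = t + 1 by omega]
      have hst : z (t + 1) = z t := by
        rw [hz t (by omega),
          affineSwap_of_sub_ne (hz.sub_ne_zero_of_left_move ha ht₀t ht hleft₀ hstay) h₁]
      refine ⟨t₀, by omega, hleft₀, fun r h₁ h₂ => ?_⟩
      obtain h₂ | rfl : r ≤ t ∨ r = t + 1 := by omega
      exacts [hstay r h₁ h₂, hst.trans (hstay t ht₀t le_rfl)]
  refine antitoneOn_of_succ_le Set.ordConnected_Icc fun t _ ht ht' => ?_
  rw [Order.succ_eq_add_one] at ht' ⊢
  obtain rfl | hmt := eq_or_lt_of_le ht.1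
  · omega
  obtain ⟨t₀, ht₀t, hleft₀, hstay⟩ := last t hmt ht.2
  rw [hz t ht'.2]
  exact affineSwap_le_self (hz.sub_ne_zero_of_left_move ha ht₀t ht'.2 hleft₀ hstay)

theorem IsWire.monotoneOn_of_right_move (hz : IsWire a L z) (ha : HasInterveningShift a L 1)
    {m : ℕ} (hright : z (m + 1) = z m + 1) : MonotoneOn z (Set.Icc m L) :=
  fun _ hs _ ht hst => neg_le_neg_iff.mp <|
    hz.neg.antitoneOn_of_left_move ha.neg (by simp only [hright]; ring) hs ht hst

theorem IsWire.lt_of_adjacent (hb : IsWire a L zb) (hc : IsWire a L zc)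
    (hdown : HasInterveningShift a L (-1)) (hup : HasInterveningShift a L 1) {k : ℕ} (hk : k < L)
    (hx : (zb k : ZMod N) - a k = 0) (hadj : zc k = zb k + 1) : zb 0 < zc 0 := by
  have hne : ∀ t ≤ L, zb t ≠ zc t := fun t ht h =>
    (by omega : zb k ≠ zc k) ((hb.eq_iff hc hk.le).mpr ((hb.eq_iff hc ht).mp h))
  by_contra! h₀
  classical
  -- the last time before `k` at which the wires are inverted; they cross at step `m`
  set m := Nat.findGreatest (fun t => zc t < zb t) k
  have hm : zc m < zb m := Nat.findGreatest_spec (P := fun t => zc t < zb t) (Nat.zero_le k)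
    (h₀.lt_of_ne (hne 0 (by omega)).symm)
  have hmk : m < k := (Nat.findGreatest_le k).lt_of_ne fun (h : m = k) => by rw [h] at hm; omega
  have hm₁ : ¬zc (m + 1) < zb (m + 1) := Nat.findGreatest_is_greatest (lt_add_one m) hmk
  replace hm₁ : zb (m + 1) < zc (m + 1) := (not_lt.mp hm₁).lt_of_ne (hne (m + 1) (by omega))
  obtain ⟨hcm, hbm⟩ : (zc m : ZMod N) - a m = 0 ∧ zb m = zc m + 1 := by
    by_contra hcross
    rw [hb m (by omega), hc m (by omega)] at hm₁
    exact (affineSwap_lt_affineSwap hm fun h h' => hcross ⟨h, h'⟩).not_gt hm₁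
  have hbleft : zb (m + 1) = zb m - 1 := by
    rw [hb m (by omega), affineSwap_of_sub_eq_one (by rw [hbm]; push_cast; linear_combination hcm)]
  have hcright : zc (m + 1) = zc m + 1 := by rw [hc m (by omega), affineSwap_of_sub_eq_zero hcm]
  have hbanti := hb.antitoneOn_of_left_move hdown hbleft
  have hcmono := hc.monotoneOn_of_right_move hup hcright
  have hck : zc (m + 1) ≤ zc k := hcmono ⟨by omega, by omega⟩ ⟨by omega, hk.le⟩ (by omega)
  have hstay : ∀ r, m < r → r ≤ k → zb r = zb (m + 1) := fun r hmr hrk => by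
    have := hbanti ⟨by omega, by omega⟩ ⟨by omega, by omega⟩ (show m + 1 ≤ r from hmr)
    have := hbanti ⟨by omega, by omega⟩ ⟨by omega, hk.le⟩ hrk
    omega
  exact hb.sub_ne_zero_of_left_move hdown hmk hk hbleft hstay hx

theorem isWire_inv_prod_take (ω : List (ZMod N)) (b : ℤ) :
    IsWire (fun t => ω.getD t 0) ω.length
      (fun t => ((ω.take t).map affineSwapEquiv).prod⁻¹ b) := by
  intro t ht
  dsimp only
  have hs : (affineSwapEquiv (ω.getD t 0))⁻¹ = affineSwapEquiv (ω.getD t 0) :=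
    inv_eq_of_mul_eq_one_right (affineSwapEquiv_mul_self _)
  rw [← List.take_concat_get' ω t ht, ← List.getD_eq_getElem ω 0 ht, List.map_append,
    List.prod_append, List.map_singleton, List.prod_singleton, mul_inv_rev, hs]
  rfl

end Wires

theorem HasInterveningNeighbours.hasInterveningShift {n : ℕ} [Fact (1 < n + 1)]
    {ω : List (ZMod (n + 1))} (hω : HasInterveningNeighbours (CoxeterMatrixAffineA n) ω)
    {d : ZMod (n + 1)} (hd : d = 1 ∨ d = -1) :
    HasInterveningShift (fun t => ω.getD t 0) ω.length d := by
  intro p q hpq hq hpq'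
  dsimp only at hpq' ⊢
  have hp : p < ω.length := by omega
  have hd₀ : ω[p] + d ≠ ω[p] := by
    rcases hd with rfl | rfl <;> simp
  have hM : CoxeterMatrixAffineA n (ω[p] + d) ω[p] ≠ 2 := by
    rw [coxeterMatrixAffineA_apply, if_neg hd₀, if_pos (by rcases hd with rfl | rfl <;> simp)]
    norm_num
  rw [List.getD_eq_getElem ω 0 hp, List.getD_eq_getElem ω 0 hq] at hpq'
  obtain ⟨r, hr, hpr, hrq, hωr⟩ :=
    hω p q hp hq hpq (by simpa using hpq') (ω[p] + d) (by simpa using hd₀) (by simpa using hM)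
  refine ⟨r, hpr, hrq, ?_⟩
  rw [List.getD_eq_getElem ω 0 hr, List.getD_eq_getElem ω 0 hp]
  simpa using hωr

theorem HasInterveningNeighbours.prod_take_lt {n : ℕ} [Fact (1 < n + 1)]
    {ω : List (ZMod (n + 1))} (hω : HasInterveningNeighbours (CoxeterMatrixAffineA n) ω)
    {k : ℕ} (hk : k < ω.length) :
    ((ω.take k).map affineSwapEquiv).prod ω[k].val <
      ((ω.take k).map affineSwapEquiv).prod (ω[k].val + 1) := by
  set f := ((ω.take k).map affineSwapEquiv).prod
  have h := (isWire_inv_prod_take ω (f ω[k].val)).lt_of_adjacent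
    (isWire_inv_prod_take ω (f (ω[k].val + 1)))
    (hω.hasInterveningShift (Or.inr rfl)) (hω.hasInterveningShift (Or.inl rfl)) hk ?_ ?_
  · exact h
  · show ((f⁻¹ (f ω[k].val) : ℤ) : ZMod (n + 1)) - ω.getD k 0 = 0
    rw [AddConstEquiv.inv_apply_apply, List.getD_eq_getElem ω 0 hk]
    simp
  · show f⁻¹ (f (ω[k].val + 1)) = f⁻¹ (f ω[k].val) + 1
    rw [AddConstEquiv.inv_apply_apply, AddConstEquiv.inv_apply_apply]

/-- In the affine Coxeter group of type Ãₙ with `n ≥ 2`, every word with the intervening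
neighbours property is reduced. -/
theorem intervening_neighbours_reduced_affineA (n : ℕ) (hn : 2 ≤ n)
    (w : List (ZMod (n + 1))) (hw : HasInterveningNeighbours (CoxeterMatrixAffineA n) w) :
    (CoxeterMatrixAffineA n).toCoxeterSystem.IsReduced w := by
  have : Fact (1 < n + 1) := ⟨by omega⟩
  set cs := (CoxeterMatrixAffineA n).toCoxeterSystem
  set ρ := cs.lift ⟨_, isLiftable_affineSwapEquiv (two_ne_zero_of_two_le hn)⟩
  have hρ : ∀ i, ρ (cs.simple i) = affineSwapEquiv i := cs.lift_apply_simple _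
  refine cs.isReduced_of_forall_add_one_le (fun g => (inversions (ρ g)).encard)
    (by simp [inversions_one]) (fun g i => ?_) (fun k hk => ?_)
  · rw [map_mul, hρ]
    exact encard_inversions_mul_le _ i
  · rw [map_mul, hρ, cs.lift_wordProd]
    exact (encard_inversions_mul_of_lt _ _ (hw.prod_take_lt hk)).ge
end

section
/- Let G be a finite tree (a finite connected acyclic simple graph). For any two orientations o and o' of G, there is a finite sequence of sink firings transforming o into o'; that is, there exist orientations o = o₀, o₁, …, o_k = o' such that each o_{i+1} is obtained from o_i by firing some sink of o_i. -/
/-- An orientation of a simple graph `G`: a relation `dir` such that `dir u v` implies that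
`u` and `v` are adjacent (the edge being directed from `u` towards `v`), and such that for
every edge `{u, v}` exactly one of `dir u v`, `dir v u` holds. -/
structure SimpleGraph.Orientation {V : Type*} (G : SimpleGraph V) where
  dir : V → V → Prop
  adj_of_dir : ∀ ⦃u v : V⦄, dir u v → G.Adj u v
  xor_of_adj : ∀ ⦃u v : V⦄, G.Adj u v → Xor' (dir u v) (dir v u)

/-- A vertex `t` is a sink of the orientation `o` if every edge at `t` is directed
towards `t`. -/
def SimpleGraph.Orientation.IsSink {V : Type*} {G : SimpleGraph V} (o : G.Orientation)
    (t : V) : Prop :=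
  ∀ ⦃u : V⦄, G.Adj u t → o.dir u t

/-- Firing the vertex `t`: all edges at `t` become directed away from `t` (so that `t` becomes
a source), and the direction of every edge not involving `t` is unchanged. -/
def SimpleGraph.Orientation.fire {V : Type*} {G : SimpleGraph V} (o : G.Orientation)
    (t : V) : G.Orientation where
  dir u v := (u = t ∧ G.Adj u v) ∨ (u ≠ t ∧ v ≠ t ∧ o.dir u v)
  adj_of_dir := by
    rintro u v (⟨rfl, h⟩ | ⟨-, -, h⟩)
    · exact h
    · exact o.adj_of_dir h
  xor_of_adj := by
    intro u v h
    by_cases hu : u = t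
    · subst hu
      have hv : v ≠ u := fun hc => G.loopless.irrefl u (hc ▸ h)
      exact Or.inl ⟨Or.inl ⟨rfl, h⟩, by
        rintro (⟨rfl, -⟩ | ⟨-, hv', -⟩)
        · exact hv rfl
        · exact hv' rfl⟩
    · by_cases hv : v = t
      · subst hv
        exact Or.inr ⟨Or.inl ⟨rfl, h.symm⟩, by
          rintro (⟨rfl, -⟩ | ⟨-, hu', -⟩)
          · exact hu rfl
          · exact hu' rfl⟩
      · rcases o.xor_of_adj h with ⟨h1, h2⟩ | ⟨h1, h2⟩
        · exact Or.inl ⟨Or.inr ⟨hu, hv, h1⟩, by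
            rintro (⟨rfl, -⟩ | ⟨-, -, h3⟩)
            · exact hv rfl
            · exact h2 h3⟩
        · exact Or.inr ⟨Or.inr ⟨hv, hu, h1⟩, by
            rintro (⟨rfl, -⟩ | ⟨-, -, h3⟩)
            · exact hu rfl
            · exact h2 h3⟩

/-!
Call `h : V → ℤ` a height of an orientation if every arrow descends by exactly one. On a tree every
orientation has a height (count ±1 along the paths from a fixed root), and on a connected graph the
difference of two heights has constant parity, so after a shift the height of the target is
`h + 2k` with `k ≥ 0`. Firing a sink raises its height by two, and among the vertices with
`k > 0` one of minimal height is always a sink; firing it decreases `∑ k`.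
-/

open Relation

theorem RelSeries.exists_head_last_of_reflTransGen {α : Type*} {r : α → α → Prop} {a b : α}
    (h : ReflTransGen r a b) : ∃ p : RelSeries {x : α × α | r x.1 x.2}, p.head = a ∧ p.last = b := by
  induction h with
  | refl => exact ⟨RelSeries.singleton _ a, rfl, rfl⟩
  | tail _ hbc ih =>
    obtain ⟨p, hp, rfl⟩ := ih
    exact ⟨p.snoc _ hbc, by simpa using hp, by simp⟩

theorem SimpleGraph.IsAcyclic.eq_concat_or_eq_concat {V : Type*} {G : SimpleGraph V}
    (hG : G.IsAcyclic) {r u v : V} {p : G.Walk r u} {q : G.Walk r v} (hp : p.IsPath)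
    (hq : q.IsPath) (a : G.Adj u v) : q = p.concat a ∨ p = q.concat a.symm := by
  by_cases hu : u ∈ q.support
  · exact .inl (hG.path_concat hp hq a hu)
  · exact .inr (hG.path_concat hq hp a.symm
      (hG.mem_support_of_ne_mem_support_of_adj_of_isPath hp hq a hu))

namespace SimpleGraph.Orientation

variable {V : Type*} {G : SimpleGraph V}

theorem ext {o o' : G.Orientation} (h : ∀ u v, o.dir u v ↔ o'.dir u v) : o = o' := by
  cases o; cases o'
  congr
  funext u v
  exact propext (h u v)

theorem dir_asymm (o : G.Orientation) {u v : V} (huv : o.dir u v) : ¬ o.dir v u :=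
  (o.xor_of_adj (o.adj_of_dir huv)).elim (fun h => h.2) (fun h => absurd huv h.2)

def FiresTo (o o' : G.Orientation) : Prop :=
  ∃ t, o.IsSink t ∧ o' = o.fire t

def IsHeight (o : G.Orientation) (h : V → ℤ) : Prop :=
  ∀ ⦃u v⦄, o.dir u v → h u = h v + 1

section IsHeight

variable {o o' : G.Orientation} {h h' : V → ℤ}

theorem IsHeight.adj (ho : o.IsHeight h) {u v : V} (a : G.Adj u v) :
    h u = h v + 1 ∨ h v = h u + 1 :=
  (o.xor_of_adj a).elim (fun huv => .inl (ho huv.1)) (fun hvu => .inr (ho hvu.1))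

theorem IsHeight.dir_iff (ho : o.IsHeight h) {u v : V} (a : G.Adj u v) :
    o.dir u v ↔ h u = h v + 1 := by
  refine ⟨fun huv => ho huv, fun hh => ?_⟩
  rcases o.xor_of_adj a with ⟨huv, -⟩ | ⟨hvu, -⟩
  · exact huv
  · have := ho hvu
    omega

theorem IsHeight.add_const (ho : o.IsHeight h) (c : ℤ) : o.IsHeight fun v => h v + c :=
  fun _ _ huv => by simp only [ho huv]; ring

theorem eq_of_isHeight (ho : o.IsHeight h) (ho' : o'.IsHeight h) : o = o' :=
  ext fun _ _ => ⟨fun huv => (ho'.dir_iff (o.adj_of_dir huv)).2 (ho huv),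
    fun huv => (ho.dir_iff (o'.adj_of_dir huv)).2 (ho' huv)⟩

theorem IsHeight.fire [DecidableEq V] (ho : o.IsHeight h) {t : V} (ht : o.IsSink t) :
    (o.fire t).IsHeight (Function.update h t (h t + 2)) := by
  rintro u v (⟨rfl, a⟩ | ⟨hu, hv, huv⟩)
  · have := ho (ht a.symm)
    simp only [Function.update_self, Function.update_of_ne a.ne']
    omega
  · simp only [Function.update_of_ne hu, Function.update_of_ne hv, ho huv]

theorem IsHeight.even_sub_sub (ho : o.IsHeight h) (ho' : o'.IsHeight h') {u v : V}
    (p : G.Walk u v) : Even (h' u - h u - (h' v - h v)) := by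
  induction p with
  | nil => simp
  | cons a _ ih =>
    rw [Int.even_iff] at ih ⊢
    rcases ho.adj a with _ | _ <;> rcases ho'.adj a with _ | _ <;> omega

theorem exists_isHeight_add_two_mul [Finite V] (hG : G.Connected) (ho : o.IsHeight h)
    (ho' : o'.IsHeight h') : ∃ k : V → ℕ, o'.IsHeight fun v => h v + 2 * k v := by
  obtain ⟨r⟩ := hG.nonempty
  have : Nonempty V := ⟨r⟩
  choose e he using fun v => ho.even_sub_sub ho' (hG.preconnected v r).some
  -- `h' - h` changes by `2 * e v` from `r` to `v`; shift `h'` so that the least `e v - e c` is `0`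
  obtain ⟨c, hc⟩ := Finite.exists_min e
  refine ⟨fun v => (e v - e c).toNat, ?_⟩
  convert ho'.add_const (h r - h' r - 2 * e c) using 2 with v
  have := he v
  rw [Int.toNat_of_nonneg (by linarith [hc v])]
  omega

theorem IsHeight.isSink_of_forall_le (ho : o.IsHeight h) {k : V → ℕ}
    (ho' : o'.IsHeight fun v => h v + 2 * k v) {t : V} (hkt : 0 < k t)
    (hmin : ∀ v, 0 < k v → h t ≤ h v) : o.IsSink t := by
  intro u a
  rw [ho.dir_iff a]
  rcases ho.adj a with _ | _
  · assumption
  · -- `u` lies below `t`, but the target height forces `k u ≥ k t > 0`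
    have := hmin u (by rcases ho'.adj a with _ | _ <;> omega)
    omega

end IsHeight

theorem reflTransGen_firesTo_of_isHeight [Fintype V] {o o' : G.Orientation} {h : V → ℤ}
    (ho : o.IsHeight h) (k : V → ℕ) (ho' : o'.IsHeight fun v => h v + 2 * k v) :
    ReflTransGen FiresTo o o' := by
  classical
  by_cases hk : ∀ v, k v = 0
  · obtain rfl : o = o' := eq_of_isHeight ho (by simpa [hk] using ho')
    exact .refl
  obtain ⟨t, ht, hmin⟩ := Finset.exists_min_image (Finset.univ.filter fun v => 0 < k v) h
    (by obtain ⟨v, hv⟩ := not_forall.1 hk; exact ⟨v, by simpa using Nat.pos_of_ne_zero hv⟩)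
  simp only [Finset.mem_filter, Finset.mem_univ, true_and] at ht hmin
  have hsink := ho.isSink_of_forall_le ho' ht hmin
  have hdecr : ∑ v, Function.update k t (k t - 1) v < ∑ v, k v := by
    refine Finset.sum_lt_sum (fun v _ => ?_) ⟨t, Finset.mem_univ t, by simpa using ht⟩
    rcases eq_or_ne v t with rfl | hv <;> simp [*]
  refine .head ⟨t, hsink, rfl⟩
    (reflTransGen_firesTo_of_isHeight (ho.fire hsink) (Function.update k t (k t - 1)) ?_)
  convert ho' using 2 with v
  rcases eq_or_ne v t with rfl | hv
  · simp only [Function.update_self]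
    omega
  · simp only [Function.update_of_ne hv]
termination_by ∑ v, k v

open scoped Classical in
noncomputable def rise (o : G.Orientation) {u v : V} (p : G.Walk u v) : ℤ :=
  (p.darts.map fun d => if o.dir d.fst d.snd then -1 else 1).sum

open scoped Classical in
theorem rise_concat (o : G.Orientation) {u v w : V} (p : G.Walk u v) (a : G.Adj v w) :
    o.rise (p.concat a) = o.rise p + if o.dir v w then -1 else 1 := by
  simp [rise, Walk.darts_concat]

end SimpleGraph.Orientation

namespace SimpleGraph.IsTree

variable {V : Type*} {G : SimpleGraph V}

theorem exists_isHeight (hG : G.IsTree) (o : G.Orientation) : ∃ h, o.IsHeight h := by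
  obtain ⟨r⟩ := hG.connected.nonempty
  choose p hp using fun v => (hG.existsUnique_path r v).exists
  refine ⟨fun v => o.rise (p v), fun u v huv => ?_⟩
  rcases IsAcyclic.eq_concat_or_eq_concat hG.isAcyclic (hp u) (hp v) (o.adj_of_dir huv) with e | e
  · simp only [e, Orientation.rise_concat, if_pos huv]
    ring
  · simp only [e, Orientation.rise_concat, if_neg (o.dir_asymm huv)]

theorem reflTransGen_firesTo [Fintype V] (hG : G.IsTree) (o o' : G.Orientation) :
    ReflTransGen Orientation.FiresTo o o' := by
  obtain ⟨h, ho⟩ := hG.exists_isHeight o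
  obtain ⟨h', ho'⟩ := hG.exists_isHeight o'
  obtain ⟨k, hk⟩ := Orientation.exists_isHeight_add_two_mul hG.connected ho ho'
  exact Orientation.reflTransGen_firesTo_of_isHeight ho k hk

end SimpleGraph.IsTree

/-- On a finite tree, any orientation can be transformed into any other orientation by a
finite sequence of sink firings. -/
theorem Orientation.tree_connected_by_sink_firings {V : Type*} [Fintype V]
    (G : SimpleGraph V) (hG : G.IsTree) (o o' : G.Orientation) :
    ∃ (k : ℕ) (seq : Fin (k + 1) → G.Orientation),
      seq 0 = o ∧ seq (Fin.last k) = o' ∧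
      ∀ i : Fin k, ∃ t : V, (seq i.castSucc).IsSink t ∧
        seq i.succ = (seq i.castSucc).fire t := by
  obtain ⟨p, rfl, rfl⟩ :=
    RelSeries.exists_head_last_of_reflTransGen (hG.reflTransGen_firesTo o o')
  exact ⟨p.length, p, rfl, rfl, p.step⟩
end
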